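/- Let d = 1, φ*(z) = √(1+z²) - 1, V ∈ C²(ℝ). Suppose Ω ⊂ ℝ is an open interval, w ∈ C²(Ω), V'' ≤ 0 (so div(∇φ*(V')) ≤ 0), Qw ≥ 0 in Ω where Qw = w''/(1+w'²)^{3/2} + w'²/√(1+w'²) + w'V'/√(1+V'²) + V''/(1+V'²)^{3/2}, and w attains an interior maximum at x₀ ∈ Ω. Then w is constant on Ω. -/

import Mathlib

/-!
Put `p = w'`. Multiplying `Qw ≥ 0` by `(1 + p²)^{3/2}` and discarding the `V'' ≤ 0` term leaves a
linear differential inequality `p' + h p ≥ 0` with `h` continuous. With a primitive `H` of `h`, the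
integrating factor makes `e^H p` nondecreasing; since `p(x₀) = 0` at the interior maximum, `w` is
nonincreasing left of `x₀` and nondecreasing right of it, so `x₀` is also a minimum of `w`.
-/

open Real Set Filter

theorem ContinuousOn.hasDerivAt_intervalIntegral {E : Type*} [NormedAddCommGroup E]
    [NormedSpace ℝ E] [CompleteSpace E] {s : Set ℝ} {h : ℝ → E} (hs : IsOpen s)
    (hs' : s.OrdConnected) (hh : ContinuousOn h s) {x₀ x : ℝ} (hx₀ : x₀ ∈ s) (hx : x ∈ s) :
    HasDerivAt (fun y => ∫ t in x₀..y, h t) (h x) x :=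
  intervalIntegral.integral_hasDerivAt_right
    ((hh.mono (hs'.uIcc_subset hx₀ hx)).intervalIntegrable)
    (hh.stronglyMeasurableAtFilter hs x hx) (hh.continuousAt (hs.mem_nhds hx))

theorem monotoneOn_exp_mul_of_deriv_add_mul_nonneg {s : Set ℝ} (hs : Convex ℝ s)
    {p p' h H : ℝ → ℝ} (hH : ∀ x ∈ s, HasDerivAt H (h x) x)
    (hp : ∀ x ∈ s, HasDerivAt p (p' x) x) (hineq : ∀ x ∈ s, 0 ≤ p' x + h x * p x) :
    MonotoneOn (fun x => exp (H x) * p x) s := by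
  have hderiv : ∀ x ∈ s, HasDerivAt (fun x => exp (H x) * p x)
      (exp (H x) * (p' x + h x * p x)) x := fun x hx =>
    (((hH x hx).exp).mul (hp x hx)).congr_deriv (by ring)
  refine monotoneOn_of_hasDerivWithinAt_nonneg hs
    (fun x hx => (hderiv x hx).continuousAt.continuousWithinAt)
    (fun x hx => (hderiv x (interior_subset hx)).hasDerivWithinAt)
    (fun x hx => mul_nonneg (exp_pos _).le (hineq x (interior_subset hx)))

theorem sign_of_deriv_add_mul_nonneg {s : Set ℝ} (hs : IsOpen s) (hs' : s.OrdConnected)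
    {p p' h : ℝ → ℝ} (hh : ContinuousOn h s) (hp : ∀ x ∈ s, HasDerivAt p (p' x) x)
    (hineq : ∀ x ∈ s, 0 ≤ p' x + h x * p x) {x₀ : ℝ} (hx₀ : x₀ ∈ s) (hp₀ : p x₀ = 0) :
    (∀ x ∈ s, x₀ ≤ x → 0 ≤ p x) ∧ (∀ x ∈ s, x ≤ x₀ → p x ≤ 0) := by
  obtain ⟨H, hH⟩ : ∃ H : ℝ → ℝ, ∀ x ∈ s, HasDerivAt H (h x) x :=
    ⟨_, fun x hx => hh.hasDerivAt_intervalIntegral hs hs' hx₀ hx⟩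
  have hmono := monotoneOn_exp_mul_of_deriv_add_mul_nonneg hs'.convex hH hp hineq
  refine ⟨fun x hx hle => ?_, fun x hx hle => ?_⟩
  · have := hmono hx₀ hx hle
    simp only [hp₀, mul_zero] at this
    exact nonneg_of_mul_nonneg_right this (exp_pos _)
  · have := hmono hx hx₀ hle
    simp only [hp₀, mul_zero] at this
    exact nonpos_of_mul_nonpos_right this (exp_pos _)

theorem isMinOn_of_deriv_nonneg_right_nonpos_left {s : Set ℝ} (hs : Convex ℝ s)
    {w w' : ℝ → ℝ} (hw : ∀ x ∈ s, HasDerivAt w (w' x) x) {x₀ : ℝ} (hx₀ : x₀ ∈ s)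
    (hright : ∀ x ∈ s, x₀ ≤ x → 0 ≤ w' x) (hleft : ∀ x ∈ s, x ≤ x₀ → w' x ≤ 0) :
    IsMinOn w s x₀ := by
  have hcont : ContinuousOn w s := fun x hx => (hw x hx).continuousAt.continuousWithinAt
  intro x hx
  rcases le_total x₀ x with hle | hle
  · have hmono : MonotoneOn w (s ∩ Ici x₀) :=
      monotoneOn_of_hasDerivWithinAt_nonneg (hs.inter (convex_Ici x₀))
        (hcont.mono inter_subset_left)
        (fun y hy => (hw y (interior_subset hy).1).hasDerivWithinAt)
        (fun y hy => hright y (interior_subset hy).1 (interior_subset hy).2)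
    exact hmono ⟨hx₀, le_refl x₀⟩ ⟨hx, hle⟩ hle
  · have hanti : AntitoneOn w (s ∩ Iic x₀) :=
      antitoneOn_of_hasDerivWithinAt_nonpos (hs.inter (convex_Iic x₀))
        (hcont.mono inter_subset_left)
        (fun y hy => (hw y (interior_subset hy).1).hasDerivWithinAt)
        (fun y hy => hleft y (interior_subset hy).1 (interior_subset hy).2)
    exact hanti ⟨hx, hle⟩ ⟨hx₀, le_refl x₀⟩ hle

noncomputable def qCoeff (P D : ℝ) : ℝ :=
  (P / √(1 + P ^ 2) + D / √(1 + D ^ 2)) * (1 + P ^ 2) ^ ((3 : ℝ) / 2)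

theorem continuous_qCoeff : Continuous fun z : ℝ × ℝ => qCoeff z.1 z.2 := by
  unfold qCoeff
  fun_prop (disch := intros; positivity)

theorem deriv_add_qCoeff_mul_nonneg {P P' D D₂ : ℝ} (hD₂ : D₂ ≤ 0)
    (hQ : 0 ≤ P' / (1 + P ^ 2) ^ ((3 : ℝ) / 2) + P ^ 2 / √(1 + P ^ 2) +
      P * D / √(1 + D ^ 2) + D₂ / (1 + D ^ 2) ^ ((3 : ℝ) / 2)) :
    0 ≤ P' + qCoeff P D * P := by
  have hP : 0 < (1 + P ^ 2) ^ ((3 : ℝ) / 2) := by positivity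
  have hD : D₂ / (1 + D ^ 2) ^ ((3 : ℝ) / 2) ≤ 0 :=
    div_nonpos_of_nonpos_of_nonneg hD₂ (by positivity)
  have hexpand : P' + qCoeff P D * P = (1 + P ^ 2) ^ ((3 : ℝ) / 2) *
      (P' / (1 + P ^ 2) ^ ((3 : ℝ) / 2) + P ^ 2 / √(1 + P ^ 2) + P * D / √(1 + D ^ 2)) := by
    unfold qCoeff; field_simp; ring
  rw [hexpand]
  exact mul_nonneg hP.le (by linarith)

/-- One-dimensional strong maximum principle for the transformed operator `Q`
of the relativistic heat equation (`c = 1`): if `V'' ≤ 0`, `Qw ≥ 0` on an open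
interval `Ω` and `w` attains an interior maximum, then `w` is constant. -/
theorem strong_max_principle_Q_one_dim (V : ℝ → ℝ) (hV : ContDiff ℝ 2 V)
    (hV'' : ∀ x, deriv (deriv V) x ≤ 0)
    (a b : ℝ) (w : ℝ → ℝ) (hw : ContDiffOn ℝ 2 w (Set.Ioo a b))
    (hQ : ∀ x ∈ Set.Ioo a b,
      0 ≤ deriv (deriv w) x / (1 + (deriv w x) ^ 2) ^ ((3 : ℝ) / 2) +
        (deriv w x) ^ 2 / Real.sqrt (1 + (deriv w x) ^ 2) +
        deriv w x * deriv V x / Real.sqrt (1 + (deriv V x) ^ 2) +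
        deriv (deriv V) x / (1 + (deriv V x) ^ 2) ^ ((3 : ℝ) / 2))
    (x₀ : ℝ) (hx₀ : x₀ ∈ Set.Ioo a b)
    (hmax : ∀ x ∈ Set.Ioo a b, w x ≤ w x₀) :
    ∀ x ∈ Set.Ioo a b, w x = w x₀ := by
  have hw' : ContDiffOn ℝ 1 (deriv w) (Ioo a b) := hw.deriv_of_isOpen isOpen_Ioo (by norm_num)
  have hasDerivAt_of_contDiffOn {f : ℝ → ℝ} {n : WithTop ℕ∞} (hf : ContDiffOn ℝ n f (Ioo a b))
      (hn : n ≠ 0) (x : ℝ) (hx : x ∈ Ioo a b) : HasDerivAt f (deriv f x) x :=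
    ((hf.differentiableOn hn x hx).differentiableAt (isOpen_Ioo.mem_nhds hx)).hasDerivAt
  have hcoeff : ContinuousOn (fun x => qCoeff (deriv w x) (deriv V x)) (Ioo a b) :=
    continuous_qCoeff.comp_continuousOn
      (hw'.continuousOn.prodMk (hV.continuous_deriv (by norm_num)).continuousOn)
  have hmin : IsMinOn w (Ioo a b) x₀ := by
    have hcrit : deriv w x₀ = 0 :=
      IsLocalMax.deriv_eq_zero (mem_of_superset (isOpen_Ioo.mem_nhds hx₀) hmax)
    obtain ⟨hright, hleft⟩ := sign_of_deriv_add_mul_nonneg isOpen_Ioo ordConnected_Ioo hcoeff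
      (hasDerivAt_of_contDiffOn hw' one_ne_zero)
      (fun x hx => deriv_add_qCoeff_mul_nonneg (hV'' x) (hQ x hx)) hx₀ hcrit
    exact isMinOn_of_deriv_nonneg_right_nonpos_left (convex_Ioo a b)
      (hasDerivAt_of_contDiffOn hw two_ne_zero) hx₀ hright hleft
  exact fun x hx => le_antisymm (hmax x hx) (hmin hx)
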